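/- Let Ψ : ℝⁿ → ℝⁿ be a globally biLipschitz bijection and σ, ω locally finite positive Borel measures possibly sharing point masses. Let P(σ,ω) denote the set of common atoms of σ and ω. Define the punctured measure ω(Q, P) = ω(Q) - sup{ω({p}) : p ∈ Q ∩ P}. Then the punctured Muckenhoupt constant A₂^{α,punct}(σ,ω) := sup_Q (σ(Q,P)/|Q|^{1-α/n})(ω(Q)/|Q|^{1-α/n}) taken over all cubes satisfies A₂^{α,punct}(σ,ω) ≈ A₂^{α,punct}(Ψ*σ, Ψ*ω), with implied constants depending only on n, α and the biLipschitz constants of Ψ. -/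

import Mathlib

open MeasureTheory
open scoped ENNReal

/-- The axis-parallel half-open cube `[0,s)ⁿ`. -/
def unitCornerCube (n : ℕ) (s : ℝ) : Set (EuclideanSpace ℝ (Fin n)) :=
  {x | ∀ i, x i ∈ Set.Ico (0 : ℝ) s}

/-- A (rotated) cube in `ℝⁿ`: the image of `[0,s)ⁿ` under a linear isometry
followed by a translation. -/
def rotatedCube {n : ℕ} (f : EuclideanSpace ℝ (Fin n) ≃ₗᵢ[ℝ] EuclideanSpace ℝ (Fin n))
    (a : EuclideanSpace ℝ (Fin n)) (s : ℝ) : Set (EuclideanSpace ℝ (Fin n)) :=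
  (fun x => a + f x) '' unitCornerCube n s

/-- The set of common atoms of `σ` and `ω`. -/
def commonAtoms {n : ℕ} (σ ω : Measure (EuclideanSpace ℝ (Fin n))) :
    Set (EuclideanSpace ℝ (Fin n)) :=
  {p | σ {p} ≠ 0 ∧ ω {p} ≠ 0}

/-- The punctured mass `μ(Q, 𝔓) = μ(Q) - sup{μ({p}) : p ∈ Q ∩ 𝔓}`. -/
noncomputable def puncturedMass {n : ℕ} (μ : Measure (EuclideanSpace ℝ (Fin n)))
    (P Q : Set (EuclideanSpace ℝ (Fin n))) : ℝ≥0∞ :=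
  μ Q - ⨆ p ∈ Q ∩ P, μ {p}

/-- `A₂^{α,punct}(σ,ω) ≤ A`: for every (rotated) cube `Q` of side length `s`,
`σ(Q,𝔓)·ω(Q) ≤ A·|Q|^{2(1-α/n)}` with `|Q| = sⁿ`. -/
def A2punctLE {n : ℕ} (α : ℝ) (σ ω : Measure (EuclideanSpace ℝ (Fin n))) (A : ℝ≥0∞) : Prop :=
  ∀ (f : EuclideanSpace ℝ (Fin n) ≃ₗᵢ[ℝ] EuclideanSpace ℝ (Fin n))
    (a : EuclideanSpace ℝ (Fin n)) (s : ℝ), 0 < s →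
    puncturedMass σ (commonAtoms σ ω) (rotatedCube f a s) * ω (rotatedCube f a s) ≤
      A * ENNReal.ofReal (s ^ (2 * ((n : ℝ) - α)))

/-!
Pushing `σ, ω` forward by `Ψ⁻¹` carries atoms to atoms, so the punctured product of `Ψ*σ, Ψ*ω`
on a cube `Q` is the punctured product of `σ, ω` on `Ψ(Q)`. As `Ψ` is `K`-Lipschitz, `Ψ(Q)` lies
in an axis-parallel cube `Q'` of side `(2K√n + 1)ℓ(Q)`. The punctured mass is monotone under
inclusion into a set of finite measure: every common atom `p` of `Q'` satisfies
`μ(Ψ(Q), 𝔓) + μ{p} ≤ μ(Q')`, since either `p ∈ Ψ(Q)`, where an atom at least as heavy is already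
removed, or `p ∈ Q' \ Ψ(Q)`. So the product on `Q` is at most the product on `Q'`, i.e. at most
`A(2K√n + 1)^{2(n-α)}|Q|^{2(1-α/n)}`. The converse is the same argument applied to `Ψ⁻¹`.
-/

section Cubes

variable {n : ℕ}

lemma dist_le_of_mem_unitCornerCube {s : ℝ} (hs : 0 ≤ s) {u v : EuclideanSpace ℝ (Fin n)}
    (hu : u ∈ unitCornerCube n s) (hv : v ∈ unitCornerCube n s) :
    dist u v ≤ Real.sqrt n * s := by
  rw [EuclideanSpace.dist_eq, ← Real.sqrt_sq hs, ← Real.sqrt_mul (Nat.cast_nonneg n)]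
  gcongr
  calc ∑ i, dist (u i) (v i) ^ 2 ≤ ∑ _i : Fin n, s ^ 2 := by
        gcongr with i
        simpa using Real.dist_le_of_mem_Icc (Set.Ico_subset_Icc_self (hu i))
          (Set.Ico_subset_Icc_self (hv i))
    _ = n * s ^ 2 := by simp

lemma dist_le_of_mem_rotatedCube
    {f : EuclideanSpace ℝ (Fin n) ≃ₗᵢ[ℝ] EuclideanSpace ℝ (Fin n)} {a : EuclideanSpace ℝ (Fin n)}
    {s : ℝ} (hs : 0 ≤ s) {x y : EuclideanSpace ℝ (Fin n)}
    (hx : x ∈ rotatedCube f a s) (hy : y ∈ rotatedCube f a s) :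
    dist x y ≤ Real.sqrt n * s := by
  obtain ⟨u, hu, rfl⟩ := hx
  obtain ⟨v, hv, rfl⟩ := hy
  rw [dist_add_left, f.dist_map]
  exact dist_le_of_mem_unitCornerCube hs hu hv

lemma isBounded_rotatedCube (f : EuclideanSpace ℝ (Fin n) ≃ₗᵢ[ℝ] EuclideanSpace ℝ (Fin n))
    (a : EuclideanSpace ℝ (Fin n)) {s : ℝ} (hs : 0 ≤ s) :
    Bornology.IsBounded (rotatedCube f a s) :=
  Metric.isBounded_iff.2 ⟨_, fun _ hx _ hy => dist_le_of_mem_rotatedCube hs hx hy⟩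

lemma closedBall_subset_rotatedCube (x₀ : EuclideanSpace ℝ (Fin n)) {r t : ℝ}
    (h : 2 * r < t) :
    Metric.closedBall x₀ r ⊆
      rotatedCube (LinearIsometryEquiv.refl ℝ _) (x₀ - WithLp.toLp 2 fun _ => t / 2) t := by
  intro x hx
  refine ⟨x - (x₀ - WithLp.toLp 2 fun _ => t / 2), fun i => ?_, by simp⟩
  have hxi := (PiLp.dist_apply_le x x₀ i).trans hx
  rw [Real.dist_eq, abs_le] at hxi
  simp only [PiLp.sub_apply, Set.mem_Ico]
  constructor <;> linarith

noncomputable def lipschitzCubeRatio (n : ℕ) (K : NNReal) : ℝ :=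
  2 * K * Real.sqrt n + 1

lemma exists_image_rotatedCube_subset {K : NNReal}
    {g : EuclideanSpace ℝ (Fin n) → EuclideanSpace ℝ (Fin n)} (hg : LipschitzWith K g)
    (f : EuclideanSpace ℝ (Fin n) ≃ₗᵢ[ℝ] EuclideanSpace ℝ (Fin n))
    (a : EuclideanSpace ℝ (Fin n)) {s : ℝ} (hs : 0 < s) :
    ∃ b, g '' rotatedCube f a s ⊆
      rotatedCube (LinearIsometryEquiv.refl ℝ _) b (lipschitzCubeRatio n K * s) := by
  have hz : a + f 0 ∈ rotatedCube f a s := ⟨0, fun _ => ⟨le_rfl, hs⟩, rfl⟩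
  have himage :
      g '' rotatedCube f a s ⊆ Metric.closedBall (g (a + f 0)) (K * (Real.sqrt n * s)) := by
    rintro _ ⟨x, hx, rfl⟩
    calc dist (g x) (g (a + f 0)) ≤ K * dist x (a + f 0) := hg.dist_le_mul _ _
      _ ≤ K * (Real.sqrt n * s) := by gcongr; exact dist_le_of_mem_rotatedCube hs.le hx hz
  refine ⟨_, himage.trans (closedBall_subset_rotatedCube _ ?_)⟩
  rw [lipschitzCubeRatio]
  linarith

end Cubes

section Atoms

variable {n : ℕ}

lemma puncturedMass_mono (μ : Measure (EuclideanSpace ℝ (Fin n)))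
    (P : Set (EuclideanSpace ℝ (Fin n))) {E F : Set (EuclideanSpace ℝ (Fin n))} (hEF : E ⊆ F)
    (hF : μ F ≠ ⊤) :
    puncturedMass μ P E ≤ puncturedMass μ P F := by
  have hsup : (⨆ p ∈ F ∩ P, μ {p}) ≤ μ F :=
    iSup₂_le fun p hp => measure_mono (Set.singleton_subset_iff.2 hp.1)
  refine ENNReal.le_sub_of_add_le_right (ne_top_of_le_ne_top hF hsup) ?_
  rcases (F ∩ P).eq_empty_or_nonempty with hFP | hFP
  · simpa [hFP, puncturedMass] using tsub_le_self.trans (measure_mono hEF)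
  rw [ENNReal.add_biSup hFP]
  refine iSup₂_le fun p hp => ?_
  by_cases hpE : p ∈ E
  · calc puncturedMass μ P E + μ {p} ≤ μ E - μ {p} + μ {p} := by
          unfold puncturedMass
          gcongr
          exact le_iSup₂ (f := fun q (_ : q ∈ E ∩ P) => μ {q}) p ⟨hpE, hp.2⟩
      _ = μ E := tsub_add_cancel_of_le (measure_mono (Set.singleton_subset_iff.2 hpE))
      _ ≤ μ F := measure_mono hEF
  · calc puncturedMass μ P E + μ {p} ≤ μ E + μ {p} := by gcongr; exact tsub_le_self
      _ = μ (E ∪ {p}) :=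
          (measure_union (Set.disjoint_singleton_right.2 hpE) (measurableSet_singleton p)).symm
      _ ≤ μ F := measure_mono (Set.union_subset hEF (Set.singleton_subset_iff.2 hp.1))

lemma MeasurableEquiv.map_apply_singleton {X Y : Type*} [MeasurableSpace X] [MeasurableSpace Y]
    (e : X ≃ᵐ Y) (μ : Measure X) (p : Y) : μ.map e {p} = μ {e.symm p} := by
  rw [e.map_apply, ← e.image_symm, Set.image_singleton]

lemma commonAtoms_map (e : EuclideanSpace ℝ (Fin n) ≃ᵐ EuclideanSpace ℝ (Fin n))
    (σ ω : Measure (EuclideanSpace ℝ (Fin n))) :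
    commonAtoms (σ.map e) (ω.map e) = e.symm ⁻¹' commonAtoms σ ω := by
  ext p
  simp [commonAtoms, MeasurableEquiv.map_apply_singleton]

lemma puncturedMass_map (e : EuclideanSpace ℝ (Fin n) ≃ᵐ EuclideanSpace ℝ (Fin n))
    (μ : Measure (EuclideanSpace ℝ (Fin n))) (P Q : Set (EuclideanSpace ℝ (Fin n))) :
    puncturedMass (μ.map e) (e.symm ⁻¹' P) Q = puncturedMass μ P (e ⁻¹' Q) := by
  rw [puncturedMass, puncturedMass, e.map_apply]
  conv_rhs => rw [← e.symm.toEquiv.iSup_comp]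
  simp [MeasurableEquiv.map_apply_singleton]

end Atoms

theorem A2punctLE.map {n : ℕ} {α : ℝ} {K : NNReal}
    {σ ω : Measure (EuclideanSpace ℝ (Fin n))} [IsFiniteMeasureOnCompacts σ] {A : ℝ≥0∞}
    (e : EuclideanSpace ℝ (Fin n) ≃ᵐ EuclideanSpace ℝ (Fin n)) (he : LipschitzWith K e.symm)
    (hA : A2punctLE α σ ω A) :
    A2punctLE α (σ.map e) (ω.map e)
      (ENNReal.ofReal (lipschitzCubeRatio n K ^ (2 * ((n : ℝ) - α))) * A) := by
  intro f a s hs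
  obtain ⟨b, hsub⟩ := exists_image_rotatedCube_subset he f a hs
  rw [e.image_symm] at hsub
  have hc : 0 < lipschitzCubeRatio n K := by rw [lipschitzCubeRatio]; positivity
  have hF : σ (rotatedCube (.refl ℝ _) b (lipschitzCubeRatio n K * s)) ≠ ⊤ :=
    (isBounded_rotatedCube _ _ (by positivity)).measure_lt_top.ne
  calc puncturedMass (σ.map e) (commonAtoms (σ.map e) (ω.map e)) (rotatedCube f a s) *
        ω.map e (rotatedCube f a s)
      = puncturedMass σ (commonAtoms σ ω) (e ⁻¹' rotatedCube f a s) *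
          ω (e ⁻¹' rotatedCube f a s) := by
        rw [commonAtoms_map, puncturedMass_map, e.map_apply]
    _ ≤ puncturedMass σ (commonAtoms σ ω) (rotatedCube _ b (lipschitzCubeRatio n K * s)) *
          ω (rotatedCube _ b (lipschitzCubeRatio n K * s)) :=
        mul_le_mul' (puncturedMass_mono σ _ hsub hF) (measure_mono hsub)
    _ ≤ A * ENNReal.ofReal ((lipschitzCubeRatio n K * s) ^ (2 * ((n : ℝ) - α))) :=
        hA _ _ _ (mul_pos hc hs)
    _ = ENNReal.ofReal (lipschitzCubeRatio n K ^ (2 * ((n : ℝ) - α))) * A *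
          ENNReal.ofReal (s ^ (2 * ((n : ℝ) - α))) := by
        rw [Real.mul_rpow hc.le hs.le, ENNReal.ofReal_mul (by positivity)]
        ring

theorem A2punctLE.of_map {n : ℕ} {α : ℝ} {K : NNReal}
    {σ ω : Measure (EuclideanSpace ℝ (Fin n))} {A : ℝ≥0∞}
    (e : EuclideanSpace ℝ (Fin n) ≃ᵐ EuclideanSpace ℝ (Fin n))
    [IsFiniteMeasureOnCompacts (σ.map e)] (he : LipschitzWith K e)
    (hA : A2punctLE α (σ.map e) (ω.map e) A) :
    A2punctLE α σ ω (ENNReal.ofReal (lipschitzCubeRatio n K ^ (2 * ((n : ℝ) - α))) * A) := by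
  simpa only [e.map_symm_map] using hA.map e.symm he

theorem punctured_A2_bilipschitz_invariance_general {n : ℕ}
    (α : ℝ) (K : NNReal) :
    ∃ C : ℝ≥0∞, C ≠ ⊤ ∧
      ∀ (Ψ Ψinv : EuclideanSpace ℝ (Fin n) → EuclideanSpace ℝ (Fin n)),
        LipschitzWith K Ψ → LipschitzWith K Ψinv →
        Function.LeftInverse Ψinv Ψ → Function.RightInverse Ψinv Ψ →
        ∀ (σ ω : Measure (EuclideanSpace ℝ (Fin n))),
          IsLocallyFiniteMeasure σ → IsLocallyFiniteMeasure ω →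
          ∀ A : ℝ≥0∞,
            (A2punctLE α σ ω A →
              A2punctLE α (Measure.map Ψinv σ) (Measure.map Ψinv ω) (C * A)) ∧
            (A2punctLE α (Measure.map Ψinv σ) (Measure.map Ψinv ω) A →
              A2punctLE α σ ω (C * A)) := by
  refine ⟨ENNReal.ofReal (lipschitzCubeRatio n K ^ (2 * ((n : ℝ) - α))), ENNReal.ofReal_ne_top,
    fun Ψ Ψinv hΨ hΨinv hl hr σ ω _ _ A => ?_⟩
  let e : EuclideanSpace ℝ (Fin n) ≃ₜ EuclideanSpace ℝ (Fin n) :=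
    ⟨⟨Ψinv, Ψ, hr, hl⟩, hΨinv.continuous, hΨ.continuous⟩
  have : IsFiniteMeasureOnCompacts (σ.map e.toMeasurableEquiv) :=
    Measure.IsFiniteMeasureOnCompacts.map σ e
  exact ⟨A2punctLE.map e.toMeasurableEquiv hΨ, A2punctLE.of_map e.toMeasurableEquiv hΨinv⟩

/-- The punctured Muckenhoupt condition is invariant, up to constants depending
only on `n`, `α` and the biLipschitz constant, under a globally biLipschitz
change of variables `Ψ` (with `Ψ*σ = (Ψ⁻¹)_*σ`). -/
theorem punctured_A2_bilipschitz_invariance {n : ℕ} (hn : 0 < n)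
    (α : ℝ) (hα0 : 0 ≤ α) (hαn : α < n) (K : NNReal) :
    ∃ C : ℝ≥0∞, C ≠ ⊤ ∧
      ∀ (Ψ Ψinv : EuclideanSpace ℝ (Fin n) → EuclideanSpace ℝ (Fin n)),
        LipschitzWith K Ψ → LipschitzWith K Ψinv →
        Function.LeftInverse Ψinv Ψ → Function.RightInverse Ψinv Ψ →
        ∀ (σ ω : Measure (EuclideanSpace ℝ (Fin n))),
          IsLocallyFiniteMeasure σ → IsLocallyFiniteMeasure ω →
          ∀ A : ℝ≥0∞,
            (A2punctLE α σ ω A →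
              A2punctLE α (Measure.map Ψinv σ) (Measure.map Ψinv ω) (C * A)) ∧
            (A2punctLE α (Measure.map Ψinv σ) (Measure.map Ψinv ω) A →
              A2punctLE α σ ω (C * A)) :=
  punctured_A2_bilipschitz_invariance_general α K
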